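/- arXiv:2303.05640 — 3 statements merged into one kernel-verified Lean document; each statement's English description precedes it below -/
import Mathlib

section
/- Let Ω be a finite set, P₀ : Ω → ℝ₊, T : Ω × Ω → ℝ₊, and L, L̃ : Ω → ℝ. Define A(x,y) = min{1, (P₀(y) e^{−L(y)} T(y,x)) / (P₀(x) e^{−L(x)} T(x,y))} and Ã(x,y) analogously with L̃ in place of L. If ε := max_{x∈Ω} |L̃(x) − L(x)| ≤ 1/4, then for all x, y ∈ Ω, |Ã(x,y) − A(x,y)| ≤ 8ε. -/
open scoped BigOperators

lemma min_one_lipschitz (a b : ℝ) (ha : 0 ≤ a) (hb : 0 ≤ b) :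
    |min 1 (a * b) - min 1 a| ≤ |b - 1| := by
  have h1 := le_abs_self (b - 1)
  have h2 := neg_abs_le (b - 1)
  rcases le_total (a * b) 1 with hab | hab <;> rcases le_total a 1 with h | h <;>
    simp only [min_eq_left, min_eq_right, hab, h] <;> rw [abs_le] <;>
    constructor <;> nlinarith

lemma exp_pert (δ ε : ℝ) (hd : |δ| ≤ 2 * ε) (he : 2 * ε ≤ 1 / 2) :
    |Real.exp δ - 1| ≤ 4 * ε := by
  have hε0 : 0 ≤ ε := by nlinarith [abs_nonneg δ]
  rcases le_or_gt 0 δ with h | h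
  · rw [abs_of_nonneg (by nlinarith [Real.add_one_le_exp δ])]
    have hδ2 : δ ≤ 2 * ε := (le_abs_self δ).trans hd
    -- exp δ ≤ 1 / (1 - δ)
    have h1 : -δ + 1 ≤ Real.exp (-δ) := Real.add_one_le_exp _
    have h2 : Real.exp δ * Real.exp (-δ) = 1 := by
      rw [← Real.exp_add]; simp
    have hpos := Real.exp_pos δ
    nlinarith [Real.exp_pos (-δ)]
  · rw [abs_of_nonpos (by nlinarith [Real.exp_lt_one_iff.mpr h])]
    have : -δ ≤ 2 * ε := (neg_le_abs δ).trans hd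
    nlinarith [Real.add_one_le_exp δ]

/-- Perturbation bound for the Metropolis-Hastings acceptance ratio when the
negative log-likelihood `L` is replaced by an approximation `L'` with
`ε := max_x |L' x - L x| ≤ 1/4`. -/
theorem acceptance_ratio_perturbation
    {Ω : Type*} [Fintype Ω] [Nonempty Ω]
    (P₀ : Ω → ℝ) (hP₀ : ∀ x, 0 < P₀ x)
    (T : Ω → Ω → ℝ) (hT : ∀ x y, 0 < T x y)
    (L L' : Ω → ℝ)
    (A A' : Ω → Ω → ℝ)
    (hA : ∀ x y, A x y =
      min 1 ((P₀ y * Real.exp (-(L y)) * T y x) / (P₀ x * Real.exp (-(L x)) * T x y)))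
    (hA' : ∀ x y, A' x y =
      min 1 ((P₀ y * Real.exp (-(L' y)) * T y x) / (P₀ x * Real.exp (-(L' x)) * T x y)))
    (ε : ℝ)
    (hε : ε = Finset.univ.sup' Finset.univ_nonempty (fun x => |L' x - L x|))
    (hε14 : ε ≤ 1 / 4) :
    ∀ x y, |A' x y - A x y| ≤ 8 * ε := by
  intro x y
  have hbound : ∀ z : Ω, |L' z - L z| ≤ ε := by
    intro z; rw [hε]
    exact Finset.le_sup' (fun x => |L' x - L x|) (Finset.mem_univ z)
  have hε0 : 0 ≤ ε := (abs_nonneg _).trans (hbound x)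
  set δ := (L y - L' y) + (L' x - L x) with hδdef
  have hδ : |δ| ≤ 2 * ε := by
    calc |δ| ≤ |L y - L' y| + |L' x - L x| := abs_add_le _ _
    _ ≤ ε + ε := by
        gcongr
        · rw [abs_sub_comm]; exact hbound y
        · exact hbound x
    _ = 2 * ε := by ring
  set r := (P₀ y * Real.exp (-(L y)) * T y x) / (P₀ x * Real.exp (-(L x)) * T x y) with hr
  have hr0 : 0 ≤ r := div_nonneg (mul_nonneg (mul_nonneg (hP₀ y).le (Real.exp_pos _).le) (hT y x).le) (mul_nonneg (mul_nonneg (hP₀ x).le (Real.exp_pos _).le) (hT x y).le)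
  have key : (P₀ y * Real.exp (-(L' y)) * T y x) / (P₀ x * Real.exp (-(L' x)) * T x y)
      = r * Real.exp δ := by
    rw [hr]
    have e1 : Real.exp (-(L' y)) = Real.exp (-(L y)) * Real.exp (L y - L' y) := by
      rw [← Real.exp_add]; ring_nf
    have e2 : Real.exp (-(L x)) = Real.exp (-(L' x)) * Real.exp (L' x - L x) := by
      rw [← Real.exp_add]; ring_nf
    have e3 : Real.exp δ = Real.exp (L y - L' y) * Real.exp (L' x - L x) := by
      rw [← Real.exp_add]
    rw [e1, e2, e3]
    have h1 : P₀ x ≠ 0 := (hP₀ x).ne'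
    have h2 : T x y ≠ 0 := (hT x y).ne'
    have h3 : Real.exp (-(L' x)) ≠ 0 := (Real.exp_pos _).ne'
    have h4 : Real.exp (L' x - L x) ≠ 0 := (Real.exp_pos _).ne'
    field_simp
  rw [hA, hA', key, ← hr]
  calc |min 1 (r * Real.exp δ) - min 1 r| ≤ |Real.exp δ - 1| :=
        min_one_lipschitz r _ hr0 (Real.exp_pos _).le
    _ ≤ 4 * ε := exp_pert δ ε hδ (by linarith)
    _ ≤ 8 * ε := by linarith
end

section
/- Let P be a probability distribution on a finite set Ω, with the state |P⟩ = Σ_{x∈Ω} √(P(x)) |x⟩|0⟩|0⟩. Under the detailed balance condition P(x)T(x,y)A(x,y) = P(y)T(y,x)A(y,x) for the Metropolis-Hastings acceptance ratio A, the quantum walk operator U = R V† B† S F B V satisfies U|P⟩ = |P⟩, i.e. |P⟩ is an eigenstate of U with eigenvalue 1. -/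
open scoped BigOperators

/-- The state `|P⟩ = Σ_x √(P x) |x⟩|0⟩|0⟩` is a fixed point (eigenvector with
eigenvalue 1) of the Metropolis-Hastings quantum walk operator
`U = R V† B† S F B V`, under the detailed balance condition
`P(x)T(x,y)A(x,y) = P(y)T(y,x)A(y,x)`. -/
theorem quantum_walk_fixes_target_state
    {Ω : Type*} [Fintype Ω] [DecidableEq Ω] [AddCommGroup Ω]
    (P : Ω → ℝ) (hPpos : ∀ x, 0 < P x) (hPsum : ∑ x, P x = 1)
    (T : Ω → Ω → ℝ) (hTnonneg : ∀ x y, 0 ≤ T x y) (hTsum : ∀ x, ∑ y, T x y = 1)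
    (A : Ω → Ω → ℝ) (hA0 : ∀ x y, 0 ≤ A x y) (hA1 : ∀ x y, A x y ≤ 1)
    (hdb : ∀ x y, P x * T x y * A x y = P y * T y x * A y x)
    (V B S F R : EuclideanSpace ℂ (Ω × Ω × Bool) →L[ℂ] EuclideanSpace ℂ (Ω × Ω × Bool))
    (hVu : V ∈ unitary (EuclideanSpace ℂ (Ω × Ω × Bool) →L[ℂ] EuclideanSpace ℂ (Ω × Ω × Bool)))
    (hBu : B ∈ unitary (EuclideanSpace ℂ (Ω × Ω × Bool) →L[ℂ] EuclideanSpace ℂ (Ω × Ω × Bool)))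
    (hV : ∀ x : Ω, V (EuclideanSpace.single (x, (0 : Ω), false) (1 : ℂ)) =
      ∑ d : Ω, (Real.sqrt (T x (x + d)) : ℂ) • EuclideanSpace.single (x, d, false) (1 : ℂ))
    (hBf : ∀ x d : Ω, B (EuclideanSpace.single (x, d, false) (1 : ℂ)) =
      (Real.sqrt (1 - A x (x + d)) : ℂ) • EuclideanSpace.single (x, d, false) (1 : ℂ) +
        (Real.sqrt (A x (x + d)) : ℂ) • EuclideanSpace.single (x, d, true) (1 : ℂ))
    (hBt : ∀ x d : Ω, B (EuclideanSpace.single (x, d, true) (1 : ℂ)) =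
      -(Real.sqrt (A x (x + d)) : ℂ) • EuclideanSpace.single (x, d, false) (1 : ℂ) +
        (Real.sqrt (1 - A x (x + d)) : ℂ) • EuclideanSpace.single (x, d, true) (1 : ℂ))
    (hFf : ∀ x d : Ω, F (EuclideanSpace.single (x, d, false) (1 : ℂ)) =
      EuclideanSpace.single (x, d, false) (1 : ℂ))
    (hFt : ∀ x d : Ω, F (EuclideanSpace.single (x, d, true) (1 : ℂ)) =
      EuclideanSpace.single (x + d, d, true) (1 : ℂ))
    (hSf : ∀ x d : Ω, S (EuclideanSpace.single (x, d, false) (1 : ℂ)) =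
      EuclideanSpace.single (x, d, false) (1 : ℂ))
    (hSt : ∀ x d : Ω, S (EuclideanSpace.single (x, d, true) (1 : ℂ)) =
      EuclideanSpace.single (x, -d, true) (1 : ℂ))
    (hR0 : ∀ x : Ω, R (EuclideanSpace.single (x, (0 : Ω), false) (1 : ℂ)) =
      EuclideanSpace.single (x, (0 : Ω), false) (1 : ℂ))
    (hR : ∀ (x d : Ω) (c : Bool), (d, c) ≠ ((0 : Ω), false) →
      R (EuclideanSpace.single (x, d, c) (1 : ℂ)) = -EuclideanSpace.single (x, d, c) (1 : ℂ)) :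
    (R ∘L ContinuousLinearMap.adjoint V ∘L ContinuousLinearMap.adjoint B ∘L S ∘L F ∘L B ∘L V)
        (∑ x : Ω, (Real.sqrt (P x) : ℂ) • EuclideanSpace.single (x, (0 : Ω), false) (1 : ℂ)) =
      ∑ x : Ω, (Real.sqrt (P x) : ℂ) • EuclideanSpace.single (x, (0 : Ω), false) (1 : ℂ) := by
  classical
  set ψ : EuclideanSpace ℂ (Ω × Ω × Bool) :=
    ∑ x : Ω, (Real.sqrt (P x) : ℂ) • EuclideanSpace.single (x, (0:Ω), false) (1:ℂ) with hψ
  -- detailed balance at the level of square roots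
  have hsqrtdb : ∀ x y : Ω,
      Real.sqrt (P x) * Real.sqrt (T x y) * Real.sqrt (A x y)
        = Real.sqrt (P y) * Real.sqrt (T y x) * Real.sqrt (A y x) := by
    intro x y
    rw [← Real.sqrt_mul (hPpos x).le, ← Real.sqrt_mul (mul_nonneg (hPpos x).le (hTnonneg x y)),
        ← Real.sqrt_mul (hPpos y).le, ← Real.sqrt_mul (mul_nonneg (hPpos y).le (hTnonneg y x)),
        hdb x y]
  -- Step 1 : V ψ
  have h1 : V ψ = ∑ x : Ω, ∑ d : Ω,
      ((Real.sqrt (P x) : ℂ) * (Real.sqrt (T x (x+d)) : ℂ)) •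
        EuclideanSpace.single (x, d, false) (1:ℂ) := by
    rw [hψ, map_sum]
    refine Finset.sum_congr rfl fun x _ => ?_
    rw [map_smul, hV x, Finset.smul_sum]
    exact Finset.sum_congr rfl fun d _ => smul_smul _ _ _
  -- Step 2 : B (V ψ)
  have h2 : B (V ψ) =
      (∑ x : Ω, ∑ d : Ω,
        ((Real.sqrt (P x) : ℂ) * (Real.sqrt (T x (x+d)) : ℂ) * (Real.sqrt (1 - A x (x+d)) : ℂ)) •
          EuclideanSpace.single (x, d, false) (1:ℂ)) +
      (∑ x : Ω, ∑ d : Ω,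
        ((Real.sqrt (P x) : ℂ) * (Real.sqrt (T x (x+d)) : ℂ) * (Real.sqrt (A x (x+d)) : ℂ)) •
          EuclideanSpace.single (x, d, true) (1:ℂ)) := by
    rw [h1, map_sum, ← Finset.sum_add_distrib]
    refine Finset.sum_congr rfl fun x _ => ?_
    rw [map_sum, ← Finset.sum_add_distrib]
    refine Finset.sum_congr rfl fun d _ => ?_
    rw [map_smul, hBf x d, smul_add, smul_smul, smul_smul]
  -- Step 3 : S (F (B (V ψ))) = B (V ψ)
  have h3 : S (F (B (V ψ))) = B (V ψ) := by
    rw [h2, map_add, map_add]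
    have hFfalse : F (∑ x : Ω, ∑ d : Ω,
        ((Real.sqrt (P x) : ℂ) * (Real.sqrt (T x (x+d)) : ℂ) * (Real.sqrt (1 - A x (x+d)) : ℂ)) •
          EuclideanSpace.single (x, d, false) (1:ℂ)) =
        ∑ x : Ω, ∑ d : Ω,
        ((Real.sqrt (P x) : ℂ) * (Real.sqrt (T x (x+d)) : ℂ) * (Real.sqrt (1 - A x (x+d)) : ℂ)) •
          EuclideanSpace.single (x, d, false) (1:ℂ) := by
      rw [map_sum]
      refine Finset.sum_congr rfl fun x _ => ?_
      rw [map_sum]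
      exact Finset.sum_congr rfl fun d _ => by rw [map_smul, hFf]
    have hFtrue : F (∑ x : Ω, ∑ d : Ω,
        ((Real.sqrt (P x) : ℂ) * (Real.sqrt (T x (x+d)) : ℂ) * (Real.sqrt (A x (x+d)) : ℂ)) •
          EuclideanSpace.single (x, d, true) (1:ℂ)) =
        ∑ x : Ω, ∑ d : Ω,
        ((Real.sqrt (P x) : ℂ) * (Real.sqrt (T x (x+d)) : ℂ) * (Real.sqrt (A x (x+d)) : ℂ)) •
          EuclideanSpace.single (x + d, d, true) (1:ℂ) := by
      rw [map_sum]
      refine Finset.sum_congr rfl fun x _ => ?_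
      rw [map_sum]
      exact Finset.sum_congr rfl fun d _ => by rw [map_smul, hFt]
    have hSfalse : S (∑ x : Ω, ∑ d : Ω,
        ((Real.sqrt (P x) : ℂ) * (Real.sqrt (T x (x+d)) : ℂ) * (Real.sqrt (1 - A x (x+d)) : ℂ)) •
          EuclideanSpace.single (x, d, false) (1:ℂ)) =
        ∑ x : Ω, ∑ d : Ω,
        ((Real.sqrt (P x) : ℂ) * (Real.sqrt (T x (x+d)) : ℂ) * (Real.sqrt (1 - A x (x+d)) : ℂ)) •
          EuclideanSpace.single (x, d, false) (1:ℂ) := by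
      rw [map_sum]
      refine Finset.sum_congr rfl fun x _ => ?_
      rw [map_sum]
      exact Finset.sum_congr rfl fun d _ => by rw [map_smul, hSf]
    have hStrue : S (∑ x : Ω, ∑ d : Ω,
        ((Real.sqrt (P x) : ℂ) * (Real.sqrt (T x (x+d)) : ℂ) * (Real.sqrt (A x (x+d)) : ℂ)) •
          EuclideanSpace.single (x + d, d, true) (1:ℂ)) =
        ∑ x : Ω, ∑ d : Ω,
        ((Real.sqrt (P x) : ℂ) * (Real.sqrt (T x (x+d)) : ℂ) * (Real.sqrt (A x (x+d)) : ℂ)) •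
          EuclideanSpace.single (x + d, -d, true) (1:ℂ) := by
      rw [map_sum]
      refine Finset.sum_congr rfl fun x _ => ?_
      rw [map_sum]
      exact Finset.sum_congr rfl fun d _ => by rw [map_smul, hSt]
    rw [hFfalse, hFtrue, hSfalse, hStrue]
    congr 1
    -- reindex the true part
    let σ : Ω × Ω ≃ Ω × Ω :=
      { toFun := fun p => (p.1 + p.2, -p.2)
        invFun := fun p => (p.1 + p.2, -p.2)
        left_inv := fun p => by simp
        right_inv := fun p => by simp }
    rw [← Fintype.sum_prod_type', ← Fintype.sum_prod_type']
    refine Fintype.sum_equiv σ _ _ fun p => ?_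
    obtain ⟨x, d⟩ := p
    show _ • EuclideanSpace.single (x + d, -d, true) (1:ℂ)
        = _ • EuclideanSpace.single (x + d, -d, true) (1:ℂ)
    congr 1
    simp only [σ, Equiv.coe_fn_mk]
    rw [show x + d + -d = x from by abel]
    exact_mod_cast hsqrtdb x (x + d)
  -- unitarity consequences
  have hBadj : ∀ v, ContinuousLinearMap.adjoint B (B v) = v := by
    intro v
    have h := (Unitary.mem_iff.mp hBu).1
    have h' : (star B * B) v = v := by rw [h]; rfl
    rwa [ContinuousLinearMap.mul_apply, ContinuousLinearMap.star_eq_adjoint] at h'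
  have hVadj : ∀ v, ContinuousLinearMap.adjoint V (V v) = v := by
    intro v
    have h := (Unitary.mem_iff.mp hVu).1
    have h' : (star V * V) v = v := by rw [h]; rfl
    rwa [ContinuousLinearMap.mul_apply, ContinuousLinearMap.star_eq_adjoint] at h'
  have hRψ : R ψ = ψ := by
    rw [hψ, map_sum]
    exact Finset.sum_congr rfl fun x _ => by rw [map_smul, hR0]
  simp only [ContinuousLinearMap.comp_apply]
  rw [h3, hBadj, hVadj]
  exact hRψ
end

section
/- Let |φ₁⟩, |φ₂⟩ be unit vectors in a Hilbert space with |⟨φ₁|φ₂⟩|² ≥ p for some p ∈ (0,1]. Let ω = e^{iπ/3} and R_i = ω|φ_i⟩⟨φ_i| + (I − |φ_i⟩⟨φ_i|) for i = 1,2. Define unitaries recursively by U₀ = I and U_{m+1} = U_m R₁ U_m† R₂ U_m. Then for every m ∈ ℕ, |⟨φ₂| U_m |φ₁⟩|² ≥ 1 − (1 − p)^{3^m}. -/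
/-!
Conjugation by the unitary `U = U_m` turns `U R₁ U†` into the phase reflection about `ψ = U φ₁`,
so `a_{m+1} = ⟪φ₂, R_ψ R_{φ₂} ψ⟫ = a_m (2ω - 1 + (ω - 1)² |a_m|²)` where `a_m = ⟪φ₂, U_m φ₁⟫`.
For `ω = e^{iπ/3}` one has `2ω - 1 = i√3` and `(ω - 1)² = -ω`, and the failure probability cubes
exactly: `1 - |a_{m+1}|² = (1 - |a_m|²)³`. Hence `1 - |a_m|² = (1 - |⟪φ₁, φ₂⟫|²)^{3^m}`.
-/

/-- The recursively defined unitaries of Grover's π/3 fixed-point amplitude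
amplification: `U₀ = I`, `U_{m+1} = U_m R₁ U_m† R₂ U_m`. -/
noncomputable def groverSeq {H : Type*} [NormedAddCommGroup H] [InnerProductSpace ℂ H]
    [CompleteSpace H] (R₁ R₂ : H →L[ℂ] H) : ℕ → (H →L[ℂ] H)
  | 0 => 1
  | m + 1 =>
      groverSeq R₁ R₂ m ∘L R₁ ∘L
        ContinuousLinearMap.adjoint (groverSeq R₁ R₂ m) ∘L R₂ ∘L groverSeq R₁ R₂ m

open ContinuousLinearMap ComplexConjugate
open scoped InnerProductSpace

section PhaseReflection

variable {H : Type*} [NormedAddCommGroup H] [InnerProductSpace ℂ H]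

/-- `ω|φ⟩⟨φ| + (I − |φ⟩⟨φ|)`. -/
noncomputable def phaseReflection (ω : ℂ) (φ : H) : H →L[ℂ] H :=
  ω • (innerSL ℂ φ).smulRight φ + (1 - (innerSL ℂ φ).smulRight φ)

theorem phaseReflection_apply (ω : ℂ) (φ x : H) :
    phaseReflection ω φ x = x + ((ω - 1) * ⟪φ, x⟫_ℂ) • φ := by
  simp only [phaseReflection, add_apply, smul_apply, sub_apply, one_apply_eq_self,
    smulRight_apply, innerSL_apply_apply]
  module

theorem phaseReflection_one (φ : H) : phaseReflection 1 φ = 1 := by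
  ext x
  simp [phaseReflection_apply]

theorem phaseReflection_mul {φ : H} (hφ : ‖φ‖ = 1) (α β : ℂ) :
    phaseReflection α φ * phaseReflection β φ = phaseReflection (α * β) φ := by
  have hφφ : ⟪φ, φ⟫_ℂ = 1 := by simp [inner_self_eq_norm_sq_to_K, hφ]
  ext x
  simp only [mul_apply_eq_comp, phaseReflection_apply, inner_add_right, inner_smul_right, hφφ]
  match_scalars <;> ring

theorem adjoint_phaseReflection [CompleteSpace H] (ω : ℂ) (φ : H) :
    adjoint (phaseReflection ω φ) = phaseReflection (conj ω) φ := by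
  refine ((eq_adjoint_iff _ _).mpr fun x y => ?_).symm
  simp only [phaseReflection_apply, inner_add_left, inner_add_right, inner_smul_left,
    inner_smul_right, map_mul, map_sub, map_one, Complex.conj_conj, inner_conj_symm]
  ring

theorem phaseReflection_mem_unitary [CompleteSpace H] {φ : H} (hφ : ‖φ‖ = 1) {ω : ℂ}
    (hω : ‖ω‖ = 1) : phaseReflection ω φ ∈ unitary (H →L[ℂ] H) := by
  have hωω : ω * conj ω = 1 := by
    rw [Complex.mul_conj, Complex.normSq_eq_norm_sq, hω]; norm_num
  rw [Unitary.mem_iff, star_eq_adjoint, adjoint_phaseReflection, phaseReflection_mul hφ,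
    phaseReflection_mul hφ, mul_comm (conj ω), hωω, phaseReflection_one]
  exact ⟨rfl, rfl⟩

theorem apply_phaseReflection_adjoint_apply [CompleteSpace H] {U : H →L[ℂ] H}
    (hU : U ∈ unitary (H →L[ℂ] H)) (ω : ℂ) (φ x : H) :
    U (phaseReflection ω φ (adjoint U x)) = phaseReflection ω (U φ) x := by
  have hUU : U (adjoint U x) = x := by
    rw [← star_eq_adjoint, ← mul_apply_eq_comp, Unitary.mul_star_self_of_mem hU,
      one_apply_eq_self]
  rw [phaseReflection_apply, phaseReflection_apply, map_add, map_smul, hUU,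
    adjoint_inner_right]

theorem inner_phaseReflection_phaseReflection {φ ψ : H} (hφ : ‖φ‖ = 1) (hψ : ‖ψ‖ = 1)
    (ω : ℂ) :
    ⟪φ, phaseReflection ω ψ (phaseReflection ω φ ψ)⟫_ℂ
      = ⟪φ, ψ⟫_ℂ * (2 * ω - 1 + (ω - 1) ^ 2 * (‖⟪φ, ψ⟫_ℂ‖ ^ 2 : ℝ)) := by
  have hφφ : ⟪φ, φ⟫_ℂ = 1 := by simp [inner_self_eq_norm_sq_to_K, hφ]
  have hψψ : ⟪ψ, ψ⟫_ℂ = 1 := by simp [inner_self_eq_norm_sq_to_K, hψ]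
  rw [Complex.ofReal_pow, ← Complex.mul_conj']
  simp only [phaseReflection_apply, inner_add_right, inner_smul_right, hφφ, hψψ]
  rw [← inner_conj_symm ψ φ]
  ring

end PhaseReflection

theorem one_sub_norm_sq_mul_piThird (a : ℂ) :
    1 - ‖a * (2 * Complex.exp (Real.pi / 3 * Complex.I) - 1 +
        (Complex.exp (Real.pi / 3 * Complex.I) - 1) ^ 2 * (‖a‖ ^ 2 : ℝ))‖ ^ 2
      = (1 - ‖a‖ ^ 2) ^ 3 := by
  have hω : Complex.exp (Real.pi / 3 * Complex.I) = 1 / 2 + (√3 / 2 : ℝ) * Complex.I := by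
    rw [← Complex.ofReal_ofNat, ← Complex.ofReal_div, Complex.exp_mul_I, ← Complex.ofReal_cos,
      ← Complex.ofReal_sin, Real.cos_pi_div_three, Real.sin_pi_div_three, Complex.ofReal_div,
      Complex.ofReal_one, Complex.ofReal_ofNat]
  have h3 : √3 ^ 2 = 3 := Real.sq_sqrt (by norm_num)
  have h3' : (√3 : ℂ) ^ 2 = 3 := by exact_mod_cast h3
  set t := ‖a‖ ^ 2
  have hfactor : 2 * Complex.exp (Real.pi / 3 * Complex.I) - 1 +
      (Complex.exp (Real.pi / 3 * Complex.I) - 1) ^ 2 * t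
        = (-t / 2 : ℝ) + (√3 * (1 - t / 2) : ℝ) * Complex.I := by
    rw [hω]
    push_cast
    linear_combination (t * √3 ^ 2 / 4 : ℂ) * Complex.I_sq - (t / 4 : ℂ) * h3'
  rw [norm_mul, mul_pow, hfactor, Complex.sq_norm (_ + _), Complex.normSq_add_mul_I]
  linear_combination (-t * (1 - t / 2) ^ 2) * h3

section GroverSeq

variable {H : Type*} [NormedAddCommGroup H] [InnerProductSpace ℂ H] [CompleteSpace H]

theorem groverSeq_mem_unitary {R₁ R₂ : H →L[ℂ] H} (h₁ : R₁ ∈ unitary (H →L[ℂ] H))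
    (h₂ : R₂ ∈ unitary (H →L[ℂ] H)) (m : ℕ) : groverSeq R₁ R₂ m ∈ unitary (H →L[ℂ] H) := by
  induction m with
  | zero => exact one_mem _
  | succ m ih =>
    rw [groverSeq, ← star_eq_adjoint]
    exact mul_mem ih (mul_mem h₁ (mul_mem (Unitary.star_mem ih) (mul_mem h₂ ih)))

theorem inner_groverSeq_phaseReflection_succ {φ₁ φ₂ : H} (h₁ : ‖φ₁‖ = 1) (h₂ : ‖φ₂‖ = 1)
    {ω : ℂ} (hω : ‖ω‖ = 1) (m : ℕ) :
    ⟪φ₂, groverSeq (phaseReflection ω φ₁) (phaseReflection ω φ₂) (m + 1) φ₁⟫_ℂ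
      = ⟪φ₂, groverSeq (phaseReflection ω φ₁) (phaseReflection ω φ₂) m φ₁⟫_ℂ *
        (2 * ω - 1 + (ω - 1) ^ 2 *
          (‖⟪φ₂, groverSeq (phaseReflection ω φ₁) (phaseReflection ω φ₂) m φ₁⟫_ℂ‖ ^ 2 : ℝ)) := by
  have hU := groverSeq_mem_unitary (phaseReflection_mem_unitary h₁ hω)
    (phaseReflection_mem_unitary h₂ hω) m
  rw [groverSeq, comp_apply, comp_apply, comp_apply, comp_apply,
    apply_phaseReflection_adjoint_apply hU]
  exact inner_phaseReflection_phaseReflection h₂ (by rw [norm_map_of_mem_unitary hU, h₁]) ω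

theorem one_sub_norm_inner_groverSeq_piThird_sq {φ₁ φ₂ : H} (h₁ : ‖φ₁‖ = 1) (h₂ : ‖φ₂‖ = 1)
    (m : ℕ) :
    1 - ‖⟪φ₂, groverSeq (phaseReflection (Complex.exp (Real.pi / 3 * Complex.I)) φ₁)
        (phaseReflection (Complex.exp (Real.pi / 3 * Complex.I)) φ₂) m φ₁⟫_ℂ‖ ^ 2
      = (1 - ‖⟪φ₁, φ₂⟫_ℂ‖ ^ 2) ^ 3 ^ m := by
  induction m with
  | zero => rw [groverSeq, one_apply_eq_self, norm_inner_symm, pow_zero, pow_one]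
  | succ m ih =>
    have hω : ‖Complex.exp (Real.pi / 3 * Complex.I)‖ = 1 := by
      rw [← Complex.ofReal_ofNat, ← Complex.ofReal_div, Complex.norm_exp_ofReal_mul_I]
    rw [inner_groverSeq_phaseReflection_succ h₁ h₂ hω, one_sub_norm_sq_mul_piThird, ih,
      ← pow_mul, ← pow_succ]

end GroverSeq

theorem pi_three_amplitude_amplification_general
    {H : Type*} [NormedAddCommGroup H] [InnerProductSpace ℂ H] [CompleteSpace H]
    (φ₁ φ₂ : H) (h₁ : ‖φ₁‖ = 1) (h₂ : ‖φ₂‖ = 1)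
    (p : ℝ)
    (hover : p ≤ ‖(inner ℂ φ₁ φ₂ : ℂ)‖ ^ 2)
    (R₁ R₂ : H →L[ℂ] H)
    (hR₁ : R₁ = Complex.exp (Real.pi / 3 * Complex.I) • ((innerSL ℂ φ₁).smulRight φ₁) +
      (1 - (innerSL ℂ φ₁).smulRight φ₁))
    (hR₂ : R₂ = Complex.exp (Real.pi / 3 * Complex.I) • ((innerSL ℂ φ₂).smulRight φ₂) +
      (1 - (innerSL ℂ φ₂).smulRight φ₂)) :
    ∀ m : ℕ, 1 - (1 - p) ^ (3 ^ m) ≤ ‖(inner ℂ φ₂ ((groverSeq R₁ R₂ m) φ₁) : ℂ)‖ ^ 2 := by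
  intro m
  change R₁ = phaseReflection _ φ₁ at hR₁
  change R₂ = phaseReflection _ φ₂ at hR₂
  have hfailure := one_sub_norm_inner_groverSeq_piThird_sq h₁ h₂ m
  rw [← hR₁, ← hR₂] at hfailure
  have hoverlap : ‖⟪φ₁, φ₂⟫_ℂ‖ ≤ 1 := by simpa [h₁, h₂] using norm_inner_le_norm (𝕜 := ℂ) φ₁ φ₂
  have hfailure_nonneg : 0 ≤ 1 - ‖⟪φ₁, φ₂⟫_ℂ‖ ^ 2 :=
    sub_nonneg.2 (pow_le_one₀ (norm_nonneg _) hoverlap)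
  calc 1 - (1 - p) ^ 3 ^ m ≤ 1 - (1 - ‖⟪φ₁, φ₂⟫_ℂ‖ ^ 2) ^ 3 ^ m := by gcongr
    _ = _ := by linarith

/-- Grover's π/3 fixed-point amplitude amplification: if `|⟨φ₁|φ₂⟩|² ≥ p` and
`R_i = e^{iπ/3}|φ_i⟩⟨φ_i| + (I − |φ_i⟩⟨φ_i|)`, then
`|⟨φ₂|U_m|φ₁⟩|² ≥ 1 − (1 − p)^{3^m}` for every `m`. -/
theorem pi_three_amplitude_amplification
    {H : Type*} [NormedAddCommGroup H] [InnerProductSpace ℂ H] [CompleteSpace H]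
    (φ₁ φ₂ : H) (h₁ : ‖φ₁‖ = 1) (h₂ : ‖φ₂‖ = 1)
    (p : ℝ) (hp : p ∈ Set.Ioc (0 : ℝ) 1)
    (hover : p ≤ ‖(inner ℂ φ₁ φ₂ : ℂ)‖ ^ 2)
    (R₁ R₂ : H →L[ℂ] H)
    (hR₁ : R₁ = Complex.exp (Real.pi / 3 * Complex.I) • ((innerSL ℂ φ₁).smulRight φ₁) +
      (1 - (innerSL ℂ φ₁).smulRight φ₁))
    (hR₂ : R₂ = Complex.exp (Real.pi / 3 * Complex.I) • ((innerSL ℂ φ₂).smulRight φ₂) +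
      (1 - (innerSL ℂ φ₂).smulRight φ₂)) :
    ∀ m : ℕ, 1 - (1 - p) ^ (3 ^ m) ≤ ‖(inner ℂ φ₂ ((groverSeq R₁ R₂ m) φ₁) : ℂ)‖ ^ 2 :=
  pi_three_amplitude_amplification_general φ₁ φ₂ h₁ h₂ p hover R₁ R₂ hR₁ hR₂
end
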